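/- arXiv:1402.7034 — 7 statements merged into one kernel-verified Lean document; each statement's English description precedes it below -/
import Mathlib

section
/- Let M > 0, 0 ≤ a < M, Δ(r) = r² − 2Mr + a², and define V₁(r) = Δ(3r² − 4Mr + a²)/(r² + a²)³ − 3Δ²r²/(r² + a²)⁴ for r ≥ r₊ = M + √(M² − a²). Then V₁(r) = Δ·[a²Δ + 2Mr(r² − a²)]/(r² + a²)⁴, and consequently V₁(r) ≥ 0 for all r ≥ r₊. -/
/-- The frequency-independent part V₁ of the separated Kerr potential factors as
`Δ·[a²Δ + 2Mr(r² − a²)]/(r² + a²)⁴` and is nonnegative for r ≥ r₊. -/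
theorem stmt_1 (M a : ℝ) (hM : 0 < M) (ha : 0 ≤ a) (haM : a < M)
    (rp : ℝ) (hrp : rp = M + Real.sqrt (M ^ 2 - a ^ 2))
    (Δ V₁ : ℝ → ℝ) (hΔ : ∀ r, Δ r = r ^ 2 - 2 * M * r + a ^ 2)
    (hV₁ : ∀ r, V₁ r = Δ r * (3 * r ^ 2 - 4 * M * r + a ^ 2) / (r ^ 2 + a ^ 2) ^ 3
        - 3 * (Δ r) ^ 2 * r ^ 2 / (r ^ 2 + a ^ 2) ^ 4) :
    ∀ r, rp ≤ r →
      V₁ r = Δ r * (a ^ 2 * Δ r + 2 * M * r * (r ^ 2 - a ^ 2)) / (r ^ 2 + a ^ 2) ^ 4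
      ∧ 0 ≤ V₁ r := by
  intro r hr
  have hs : 0 ≤ Real.sqrt (M ^ 2 - a ^ 2) := Real.sqrt_nonneg _
  have hMa : 0 ≤ M ^ 2 - a ^ 2 := by nlinarith
  have hsq : Real.sqrt (M ^ 2 - a ^ 2) ^ 2 = M ^ 2 - a ^ 2 := Real.sq_sqrt hMa
  have hrM : M ≤ r := by rw [hrp] at hr; linarith
  have har : a < r := lt_of_lt_of_le haM hrM
  have hrpos : 0 < r := lt_of_lt_of_le hM hrM
  have hden : 0 < r ^ 2 + a ^ 2 := by positivity
  -- Δ r ≥ 0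
  have hΔr : 0 ≤ Δ r := by
    rw [hΔ]
    have h1 : Real.sqrt (M ^ 2 - a ^ 2) ≤ r - M := by rw [hrp] at hr; linarith
    nlinarith [sq_nonneg (r - M)]
  have heq : V₁ r = Δ r * (a ^ 2 * Δ r + 2 * M * r * (r ^ 2 - a ^ 2)) / (r ^ 2 + a ^ 2) ^ 4 := by
    rw [hV₁, hΔ]
    field_simp
    ring
  refine ⟨heq, ?_⟩
  rw [heq]
  have hnum : 0 ≤ a ^ 2 * Δ r + 2 * M * r * (r ^ 2 - a ^ 2) := by
    nlinarith [mul_nonneg (sq_nonneg a) hΔr, mul_pos hM hrpos, mul_pos (mul_pos hM hrpos) (show (0:ℝ) < r^2 - a^2 by nlinarith)]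
  positivity
end

section
/- Let M > 0, 0 ≤ a < M, Δ(r) = r² − 2Mr + a², r₊ = M + √(M² − a²), and V₁(r) = Δ(3r² − 4Mr + a²)/(r² + a²)³ − 3Δ²r²/(r² + a²)⁴. Then the derivative of V₁ at the horizon satisfies (dV₁/dr)(r₊) = 4Mr₊(r₊ − M)(r₊² − a²)/(r₊² + a²)⁴, and this quantity is strictly positive. -/
/-!
Write `V₁ = Δ · g` with `g = (3r² − 4Mr + a²)/(r² + a²)³ − 3Δr²/(r² + a²)⁴`. Since `Δ(r₊) = 0`,
`V₁'(r₊) = Δ'(r₊) g(r₊) = 2(r₊ − M)(3r₊² − 4Mr₊ + a²)/(r₊² + a²)³`. Eliminating `a² = 2Mr₊ − r₊²`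
turns both this and the claimed value into `4r₊(r₊ − M)²/(r₊² + a²)³`, which is positive because
`r₊ > M > a ≥ 0`.
-/

theorem HasDerivAt.mul_of_apply_eq_zero {𝕜 : Type*} [NontriviallyNormedField 𝕜] {f g : 𝕜 → 𝕜}
    {f' x : 𝕜} (hf : HasDerivAt f f' x) (hfx : f x = 0) (hg : ContinuousAt g x) :
    HasDerivAt (fun y => f y * g y) (f' * g x) x := by
  rw [hasDerivAt_iff_tendsto_slope] at hf ⊢
  have hslope : slope (fun y => f y * g y) x = fun y => slope f x y * g y := by
    funext y
    simp only [slope_def_field, hfx, zero_mul, sub_zero, div_mul_eq_mul_div]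
  rw [hslope]
  exact hf.mul (hg.tendsto.mono_left nhdsWithin_le_nhds)

namespace Kerr

noncomputable def horizonRadius (M a : ℝ) : ℝ := M + √(M ^ 2 - a ^ 2)

theorem horizonRadius_isRoot {M a : ℝ} (h : a ^ 2 ≤ M ^ 2) :
    horizonRadius M a ^ 2 - 2 * M * horizonRadius M a + a ^ 2 = 0 := by
  have hs : √(M ^ 2 - a ^ 2) ^ 2 = M ^ 2 - a ^ 2 := Real.sq_sqrt (by linarith)
  unfold horizonRadius
  linear_combination hs

theorem lt_horizonRadius {M a : ℝ} (h : a ^ 2 < M ^ 2) : M < horizonRadius M a := by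
  unfold horizonRadius
  have : 0 < √(M ^ 2 - a ^ 2) := Real.sqrt_pos.mpr (by linarith)
  linarith

-- On the horizon `r² + a² = 2Mr` and `r² − a² = 2r(r − M)`.
theorem horizon_derivative_eq {M a r : ℝ} (hM : M ≠ 0) (hr : r ≠ 0)
    (hroot : r ^ 2 - 2 * M * r + a ^ 2 = 0) :
    (2 * r - 2 * M) * ((3 * r ^ 2 - 4 * M * r + a ^ 2) / (r ^ 2 + a ^ 2) ^ 3) =
      4 * M * r * (r - M) * (r ^ 2 - a ^ 2) / (r ^ 2 + a ^ 2) ^ 4 := by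
  have ha2 : a ^ 2 = 2 * M * r - r ^ 2 := by linear_combination hroot
  rw [ha2]
  field_simp
  ring

end Kerr

theorem stmt_2_general (M a : ℝ) (ha : 0 ≤ a) (haM : a < M)
    (rp : ℝ) (hrp : rp = M + Real.sqrt (M ^ 2 - a ^ 2))
    (Δ V₁ : ℝ → ℝ) (hΔ : ∀ r, Δ r = r ^ 2 - 2 * M * r + a ^ 2)
    (hV₁ : ∀ r, V₁ r = Δ r * (3 * r ^ 2 - 4 * M * r + a ^ 2) / (r ^ 2 + a ^ 2) ^ 3
        - 3 * (Δ r) ^ 2 * r ^ 2 / (r ^ 2 + a ^ 2) ^ 4) :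
    HasDerivAt V₁ (4 * M * rp * (rp - M) * (rp ^ 2 - a ^ 2) / (rp ^ 2 + a ^ 2) ^ 4) rp
    ∧ 0 < 4 * M * rp * (rp - M) * (rp ^ 2 - a ^ 2) / (rp ^ 2 + a ^ 2) ^ 4 := by
  have hM : 0 < M := by linarith
  have hsq : a ^ 2 < M ^ 2 := by nlinarith
  have hMrp : M < rp := hrp ▸ Kerr.lt_horizonRadius hsq
  have hrp0 : 0 < rp := by linarith
  have hden : rp ^ 2 + a ^ 2 ≠ 0 := by positivity
  have hroot : Δ rp = 0 := by rw [hΔ, hrp]; exact Kerr.horizonRadius_isRoot hsq.le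
  have hΔ' : HasDerivAt Δ (2 * rp - 2 * M) rp := by
    rw [funext hΔ]
    exact (((hasDerivAt_pow 2 rp).sub ((hasDerivAt_id rp).const_mul (2 * M))).add_const
      (a ^ 2)).congr_deriv (by ring)
  have hV₁_eq : V₁ = fun r => Δ r * ((3 * r ^ 2 - 4 * M * r + a ^ 2) / (r ^ 2 + a ^ 2) ^ 3
      - 3 * Δ r * r ^ 2 / (r ^ 2 + a ^ 2) ^ 4) := by
    funext r; rw [hV₁]; ring
  have hcont : ContinuousAt (fun r => (3 * r ^ 2 - 4 * M * r + a ^ 2) / (r ^ 2 + a ^ 2) ^ 3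
      - 3 * Δ r * r ^ 2 / (r ^ 2 + a ^ 2) ^ 4) rp := by
    rw [funext hΔ]
    fun_prop (disch := exact pow_ne_zero _ hden)
  constructor
  · rw [hV₁_eq, ← Kerr.horizon_derivative_eq hM.ne' hrp0.ne' (hΔ rp ▸ hroot)]
    simpa only [hroot, zero_mul, mul_zero, zero_div, sub_zero]
      using hΔ'.mul_of_apply_eq_zero hroot hcont
  · have hMsub : 0 < rp - M := by linarith
    have hsub : 0 < rp ^ 2 - a ^ 2 := by nlinarith
    positivity

/-- The derivative of the frequency-independent part V₁ of the Kerr potential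
at the horizon equals `4Mr₊(r₊ − M)(r₊² − a²)/(r₊² + a²)⁴` and is strictly positive. -/
theorem stmt_2 (M a : ℝ) (hM : 0 < M) (ha : 0 ≤ a) (haM : a < M)
    (rp : ℝ) (hrp : rp = M + Real.sqrt (M ^ 2 - a ^ 2))
    (Δ V₁ : ℝ → ℝ) (hΔ : ∀ r, Δ r = r ^ 2 - 2 * M * r + a ^ 2)
    (hV₁ : ∀ r, V₁ r = Δ r * (3 * r ^ 2 - 4 * M * r + a ^ 2) / (r ^ 2 + a ^ 2) ^ 3
        - 3 * (Δ r) ^ 2 * r ^ 2 / (r ^ 2 + a ^ 2) ^ 4) :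
    HasDerivAt V₁ (4 * M * rp * (rp - M) * (rp ^ 2 - a ^ 2) / (rp ^ 2 + a ^ 2) ^ 4) rp
    ∧ 0 < 4 * M * rp * (rp - M) * (rp ^ 2 - a ^ 2) / (rp ^ 2 + a ^ 2) ^ 4 :=
  stmt_2_general M a ha haM rp hrp Δ V₁ hΔ hV₁
end

section
/- Let M > 0, 0 ≤ a < M, r₊ = M + √(M² − a²), and let ω ∈ ℝ, m ∈ ℤ, Λ ∈ ℝ with Λ > 0 and Λ ≥ m². If mω ≤ am²/(2Mr₊), then the potential V₀(r) = (4Mr·amω − a²m² + (r²−2Mr+a²)Λ)/(r²+a²)² satisfies (r₊² + a²)³ · (dV₀/dr)(r₊) ≥ 4(r₊ − M)(ΛMr₊ − a²m²) ≥ 4(r₊ − M)(Mr₊ − a²)Λ > 0. In particular, dV₀/dr is strictly positive at the horizon for all superradiant frequencies. -/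
/-!
At the outer horizon `Δ(r₊) = r₊² - 2Mr₊ + a² = 0`, so the numerator of `V₀` reduces to
`4Mr₊·amω - a²m²` and `r₊² + a² = 2Mr₊`; the quotient rule then gives the closed form
`(r₊²+a²)³ V₀'(r₊) = 4maMω(a² - 3r₊²) + 4r₊a²m² + 2(r₊²+a²)(r₊-M)Λ`.
Since `a² - 3r₊² = -2r₊(2r₊ - M)`, the only possibly negative term is controlled by the
superradiance bound `2Mr₊·mω ≤ am²`, and what remains is `4(r₊-M)(ΛMr₊ - a²m²)`,
which is at least `4(r₊-M)(Mr₊ - a²)Λ > 0` because `Λ ≥ m²`.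
-/

open Real

theorem kerr_horizon_eq {M a rp : ℝ} (ha : a ^ 2 ≤ M ^ 2) (hrp : rp = M + √(M ^ 2 - a ^ 2)) :
    rp ^ 2 - 2 * M * rp + a ^ 2 = 0 := by
  rw [hrp]
  linear_combination Real.sq_sqrt (sub_nonneg.2 ha)

theorem lt_kerr_horizon {M a rp : ℝ} (ha : a ^ 2 < M ^ 2) (hrp : rp = M + √(M ^ 2 - a ^ 2)) :
    M < rp := by
  rw [hrp]
  linarith [Real.sqrt_pos.2 (sub_pos.2 ha)]

theorem cube_mul_deriv_div_sq {N : ℝ → ℝ} {N' a r : ℝ} (hN : HasDerivAt N N' r)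
    (hr : r ^ 2 + a ^ 2 ≠ 0) :
    (r ^ 2 + a ^ 2) ^ 3 * deriv (fun r => N r / (r ^ 2 + a ^ 2) ^ 2) r
      = N' * (r ^ 2 + a ^ 2) - 4 * r * N r := by
  have hD : HasDerivAt (fun r : ℝ => (r ^ 2 + a ^ 2) ^ 2) (2 * (r ^ 2 + a ^ 2) * (2 * r)) r := by
    simpa using ((hasDerivAt_pow 2 r).add_const (a ^ 2)).fun_pow 2
  rw [(hN.fun_div hD (pow_ne_zero 2 hr)).deriv]
  field_simp
  ring

theorem kerr_potential_deriv_at_horizon {M a ω Λ m r : ℝ}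
    (hΔ : r ^ 2 - 2 * M * r + a ^ 2 = 0) (hr : r ^ 2 + a ^ 2 ≠ 0) :
    (r ^ 2 + a ^ 2) ^ 3 * deriv (fun r => (4 * M * r * (a * m * ω) - a ^ 2 * m ^ 2
        + (r ^ 2 - 2 * M * r + a ^ 2) * Λ) / (r ^ 2 + a ^ 2) ^ 2) r
      = 4 * m * a * M * ω * (-3 * r ^ 2 + a ^ 2) + 4 * r * a ^ 2 * m ^ 2
        + 2 * (r ^ 2 + a ^ 2) * (r - M) * Λ := by
  have hN : HasDerivAt (fun r => 4 * M * r * (a * m * ω) - a ^ 2 * m ^ 2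
      + (r ^ 2 - 2 * M * r + a ^ 2) * Λ) (4 * M * (a * m * ω) + (2 * r - 2 * M) * Λ) r :=
    (((((hasDerivAt_id r).const_mul (4 * M)).mul_const (a * m * ω)).sub_const
      (a ^ 2 * m ^ 2)).add ((((hasDerivAt_pow 2 r).sub ((hasDerivAt_id r).const_mul (2 * M))).add_const
        (a ^ 2)).mul_const Λ)).congr_deriv (by norm_num)
  rw [cube_mul_deriv_div_sq hN hr, hΔ]
  ring

theorem horizon_deriv_lower_bound_of_superradiant {M a ω Λ m r : ℝ} (hM : 0 < M) (ha : 0 ≤ a)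
    (hMr : M < r) (hD : r ^ 2 + a ^ 2 = 2 * M * r) (hsup : m * ω * (2 * M * r) ≤ a * m ^ 2) :
    4 * (r - M) * (Λ * M * r - a ^ 2 * m ^ 2)
      ≤ 4 * m * a * M * ω * (-3 * r ^ 2 + a ^ 2) + 4 * r * a ^ 2 * m ^ 2
        + 2 * (r ^ 2 + a ^ 2) * (r - M) * Λ := by
  have hcoef : 0 ≤ 4 * (2 * r - M) * a := by nlinarith
  have hkey := mul_le_mul_of_nonneg_left hsup hcoef
  have hsq : -3 * r ^ 2 + a ^ 2 = -2 * r * (2 * r - M) := by linear_combination hD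
  rw [hsq, hD]
  nlinarith [hkey]

/-- For superradiant frequencies (mω ≤ am²/(2Mr₊)) with Λ > 0, Λ ≥ m², the Kerr
potential V₀ is strictly increasing at the horizon, quantitatively. -/
theorem stmt_5 (M a ω Λ : ℝ) (m : ℤ) (hM : 0 < M) (ha : 0 ≤ a) (haM : a < M)
    (rp : ℝ) (hrp : rp = M + Real.sqrt (M ^ 2 - a ^ 2))
    (hΛpos : 0 < Λ) (hΛm : (m : ℝ) ^ 2 ≤ Λ)
    (hsup : (m : ℝ) * ω ≤ a * (m : ℝ) ^ 2 / (2 * M * rp))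
    (V₀ : ℝ → ℝ)
    (hV₀ : ∀ r, V₀ r =
      (4 * M * r * (a * (m : ℝ) * ω) - a ^ 2 * (m : ℝ) ^ 2
        + (r ^ 2 - 2 * M * r + a ^ 2) * Λ) / (r ^ 2 + a ^ 2) ^ 2) :
    4 * (rp - M) * (Λ * M * rp - a ^ 2 * (m : ℝ) ^ 2)
      ≤ (rp ^ 2 + a ^ 2) ^ 3 * deriv V₀ rp
    ∧ 4 * (rp - M) * (M * rp - a ^ 2) * Λ
      ≤ 4 * (rp - M) * (Λ * M * rp - a ^ 2 * (m : ℝ) ^ 2)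
    ∧ 0 < 4 * (rp - M) * (M * rp - a ^ 2) * Λ
    ∧ 0 < deriv V₀ rp := by
  have ha2 : a ^ 2 < M ^ 2 := by nlinarith
  have hΔ := kerr_horizon_eq ha2.le hrp
  have hMr := lt_kerr_horizon ha2 hrp
  have hrp0 : 0 < rp := hM.trans hMr
  have hpos : 0 < rp ^ 2 + a ^ 2 := by positivity
  have hsup' : (m : ℝ) * ω * (2 * M * rp) ≤ a * (m : ℝ) ^ 2 :=
    (le_div_iff₀ (by positivity)).1 hsup
  have h1 : 4 * (rp - M) * (Λ * M * rp - a ^ 2 * (m : ℝ) ^ 2)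
      ≤ (rp ^ 2 + a ^ 2) ^ 3 * deriv V₀ rp := by
    rw [show V₀ = _ from funext hV₀, kerr_potential_deriv_at_horizon hΔ hpos.ne']
    exact horizon_deriv_lower_bound_of_superradiant hM ha hMr (by linear_combination hΔ) hsup'
  have h2 : 4 * (rp - M) * (M * rp - a ^ 2) * Λ
      ≤ 4 * (rp - M) * (Λ * M * rp - a ^ 2 * (m : ℝ) ^ 2) := by
    nlinarith [mul_nonneg (sub_nonneg.2 hMr.le) (mul_nonneg (sq_nonneg a) (sub_nonneg.2 hΛm))]
  have h3 : 0 < 4 * (rp - M) * (M * rp - a ^ 2) * Λ :=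
    mul_pos (mul_pos (by linarith) (by nlinarith)) hΛpos
  refine ⟨h1, h2, h3, pos_of_mul_pos_right (h3.trans_le (h2.trans h1)) (by positivity)⟩
end

section
/- Let M > 0, a > 0, m ∈ ℤ, ω ∈ ℝ with mω > 0, and Λ ∈ ℝ. Set r₀ = am/(2Mω), Δ_{r₀} = r₀² − 2Mr₀ + a², and V₀(r) = (4Mr·amω − a²m² + (r²−2Mr+a²)Λ)/(r²+a²)². Then ω² − V₀(r₀) = (Δ_{r₀}/(r₀² + a²)²) · ( (a²m²/(4M²))·(1 + 2M/r₀ + a²/r₀²) − Λ ). -/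
/-- Exact identity for the Kerr potential V₀ at the point r₀ = am/(2Mω):
`ω² − V₀(r₀) = (Δ_{r₀}/(r₀² + a²)²)·((a²m²/4M²)(1 + 2M/r₀ + a²/r₀²) − Λ)`. -/
theorem stmt_6 (M a ω Λ : ℝ) (m : ℤ) (hM : 0 < M) (ha : 0 < a)
    (hmω : 0 < (m : ℝ) * ω)
    (r₀ : ℝ) (hr₀ : r₀ = a * (m : ℝ) / (2 * M * ω))
    (Δr₀ : ℝ) (hΔ : Δr₀ = r₀ ^ 2 - 2 * M * r₀ + a ^ 2)
    (V₀ : ℝ → ℝ)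
    (hV₀ : ∀ r, V₀ r =
      (4 * M * r * (a * (m : ℝ) * ω) - a ^ 2 * (m : ℝ) ^ 2
        + (r ^ 2 - 2 * M * r + a ^ 2) * Λ) / (r ^ 2 + a ^ 2) ^ 2) :
    ω ^ 2 - V₀ r₀ = (Δr₀ / (r₀ ^ 2 + a ^ 2) ^ 2)
      * ((a ^ 2 * (m : ℝ) ^ 2 / (4 * M ^ 2)) * (1 + 2 * M / r₀ + a ^ 2 / r₀ ^ 2) - Λ) := by
  have hω : ω ≠ 0 := by rintro rfl; simp at hmω
  have hm : (m : ℝ) ≠ 0 := by rintro h; rw [h] at hmω; simp at hmω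
  have hr0 : 0 < r₀ := by
    have : r₀ = a * ((m : ℝ) * ω) / (2 * M * ω ^ 2) := by
      rw [hr₀]; field_simp
    rw [this]
    have h1 : 0 < a * ((m : ℝ) * ω) := mul_pos ha hmω
    positivity
  have hden : r₀ ^ 2 + a ^ 2 ≠ 0 := by positivity
  have hωeq : ω = a * (m : ℝ) / (2 * M * r₀) := by
    rw [hr₀]; field_simp
  subst hΔ
  rw [hV₀, hωeq]
  field_simp
  ring
end

section
/- Let M > 0, 0 ≤ a < M, Δ(r) = r² − 2Mr + a², and r₊ = M + √(M² − a²). Then for every r > r₊, −Δ(r) + a² − 4M²r²a²/(r² + a²)² < 0. (Equivalently, using (r²+a²)² = Δ² + 4MrΔ + 4M²r², one has Δ² + (4Mr − a²)Δ + 4Mr(Mr − a²) > 0 for r > r₊.) -/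
/-- For r strictly outside the Kerr horizon,
`−Δ(r) + a² − 4M²r²a²/(r² + a²)² < 0`; this shows the vector field
T + (2Mar/(r²+a²)²)Φ is timelike outside the horizon. -/
theorem stmt_9 (M a : ℝ) (hM : 0 < M) (ha : 0 ≤ a) (haM : a < M)
    (rp : ℝ) (hrp : rp = M + Real.sqrt (M ^ 2 - a ^ 2)) :
    ∀ r : ℝ, rp < r →
      -(r ^ 2 - 2 * M * r + a ^ 2) + a ^ 2
        - 4 * M ^ 2 * r ^ 2 * a ^ 2 / (r ^ 2 + a ^ 2) ^ 2 < 0 := by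
  intro r hr
  set s := Real.sqrt (M ^ 2 - a ^ 2) with hs
  have hsub : (0:ℝ) ≤ M ^ 2 - a ^ 2 := by nlinarith
  have hs0 : 0 ≤ s := Real.sqrt_nonneg _
  have hs2 : s ^ 2 = M ^ 2 - a ^ 2 := Real.sq_sqrt hsub
  have hrM : M + s < r := by rw [hrp] at hr; exact hr
  have hrpos : 0 < r := by nlinarith
  have hΔ : 0 < r ^ 2 - 2 * M * r + a ^ 2 := by nlinarith [sq_nonneg (r - M - s)]
  have hC : 0 < (r ^ 2 + a ^ 2) ^ 2 := by positivity
  rw [sub_neg, lt_div_iff₀ hC]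
  have hMr : a ^ 2 < M * r := by nlinarith
  nlinarith [sq_nonneg (r ^ 2 - 2 * M * r + a ^ 2), mul_pos hΔ hΔ,
    mul_pos (mul_pos hΔ hΔ) hΔ, mul_pos hΔ (sub_pos.mpr hMr),
    mul_pos (mul_pos hM hrpos) (sub_pos.mpr hMr),
    mul_pos hΔ (mul_pos (mul_pos hM hrpos) (sub_pos.mpr hMr)),
    mul_pos (mul_pos hΔ hΔ) (mul_pos hM hrpos)]
end

section
/- Let M > 0, 0 ≤ a < M, r₊ = M + √(M² − a²), r₋ = M − √(M² − a²), and define F(r) = −(r² − 2Mr + a²) + a² − 2a²r/r₊ + a²(r² + a²)²/(4M²r₊²). Then F(r₊) = 0 and F'(r₊) = −(r₊ − r₋) − 2a²/r₊ + 2a²/M = (1/(M(M + √(M²−a²)))) · ( −2M(M² − a²) − 2√(M²−a²)(M² − a²) ) < 0. In particular, there exists ε₀ > 0 such that F(r) < 0 for r ∈ (r₊, r₊ + ε₀). -/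
/-!
With `s = √(M² - a²)` the outer horizon `r₊ = M + s` is a root of `r² - 2Mr + a²`, i.e.
`r₊² + a² = 2Mr₊`; substituting this into `F` makes every term cancel at `r₊`, and turns
the derivative at `r₊` into `-2s²/M`, which is negative for a subextremal black hole (`s > 0`).
A negative derivative at a zero makes `F` negative just to the right of it.
-/

open Filter Topology

theorem HasDerivAt.eventually_lt_right {f : ℝ → ℝ} {f' x : ℝ} (hf : HasDerivAt f f' x)
    (hf' : f' < 0) : ∀ᶠ r in 𝓝[>] x, f r < f x := by
  have hslope : ∀ᶠ r in 𝓝[>] x, slope f x r < 0 :=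
    ((hasDerivAt_iff_tendsto_slope.mp hf).mono_left (nhdsGT_le_nhdsNE x)).eventually_lt_const hf'
  filter_upwards [hslope, self_mem_nhdsWithin] with r hr (hxr : x < r)
  rw [slope_def_field, div_neg_iff] at hr
  rcases hr with ⟨-, hneg⟩ | ⟨hpos, -⟩ <;> linarith

theorem HasDerivAt.exists_forall_neg_right {f : ℝ → ℝ} {f' x : ℝ} (hf : HasDerivAt f f' x)
    (hx : f x = 0) (hf' : f' < 0) : ∃ ε > 0, ∀ r, x < r → r < x + ε → f r < 0 := by
  obtain ⟨u, hxu, hsub⟩ := mem_nhdsGT_iff_exists_Ioo_subset.mp (hf.eventually_lt_right hf')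
  refine ⟨u - x, sub_pos.mpr hxu, fun r hxr hru => ?_⟩
  simpa [hx] using hsub ⟨hxr, by linarith⟩

/-- The function `F` of the statement, with the horizon radius `rp` as a free parameter. -/
noncomputable def horizonNorm (M a rp r : ℝ) : ℝ :=
  -(r ^ 2 - 2 * M * r + a ^ 2) + a ^ 2 - 2 * a ^ 2 * r / rp
    + a ^ 2 * (r ^ 2 + a ^ 2) ^ 2 / (4 * M ^ 2 * rp ^ 2)

section horizonNorm

variable {M a rp : ℝ}

theorem hasDerivAt_horizonNorm (M a rp r : ℝ) :
    HasDerivAt (horizonNorm M a rp)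
      (-(2 * r - 2 * M) - 2 * a ^ 2 / rp
        + a ^ 2 * (2 * (r ^ 2 + a ^ 2) * (2 * r)) / (4 * M ^ 2 * rp ^ 2)) r := by
  have hsq : HasDerivAt (fun r : ℝ => r ^ 2) (2 * r) r := by
    simpa using hasDerivAt_pow 2 r
  have hquad := ((hsq.sub ((hasDerivAt_id r).const_mul (2 * M))).add_const (a ^ 2)).neg
  have hlin := ((hasDerivAt_id r).const_mul (2 * a ^ 2)).div_const rp
  have hquart := (((hsq.add_const (a ^ 2)).pow 2).const_mul (a ^ 2)).div_const (4 * M ^ 2 * rp ^ 2)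
  exact (((hquad.add_const (a ^ 2)).sub hlin).add hquart).congr_deriv (by ring)

theorem horizonNorm_self (hM : M ≠ 0) (hrp : rp ≠ 0) (hroot : rp ^ 2 + a ^ 2 = 2 * M * rp) :
    horizonNorm M a rp rp = 0 := by
  have hquart : a ^ 2 * (2 * M * rp) ^ 2 / (4 * M ^ 2 * rp ^ 2) = a ^ 2 := by
    field_simp
    ring
  rw [horizonNorm, hroot, hquart, mul_div_assoc, div_self hrp]
  linear_combination -hroot

theorem hasDerivAt_horizonNorm_self (hM : M ≠ 0) (hrp : rp ≠ 0)
    (hroot : rp ^ 2 + a ^ 2 = 2 * M * rp) :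
    HasDerivAt (horizonNorm M a rp) (-(2 * rp - 2 * M) - 2 * a ^ 2 / rp + 2 * a ^ 2 / M) rp := by
  convert hasDerivAt_horizonNorm M a rp rp using 2
  rw [hroot]
  field_simp
  ring

end horizonNorm

section KerrHorizon

variable {M a s : ℝ}

theorem outer_horizon_sq_add (hs : s ^ 2 = M ^ 2 - a ^ 2) :
    (M + s) ^ 2 + a ^ 2 = 2 * M * (M + s) := by
  linear_combination hs

theorem surfaceGravity_form_eq (hM : M ≠ 0) (hMs : M + s ≠ 0) (hs : s ^ 2 = M ^ 2 - a ^ 2) :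
    -((M + s) - (M - s)) - 2 * a ^ 2 / (M + s) + 2 * a ^ 2 / M = -2 * s ^ 2 / M := by
  rw [show a ^ 2 = (M + s) * (M - s) by linear_combination hs]
  field_simp
  ring

theorem surfaceGravity_factored_eq (hM : M ≠ 0) (hMs : M + s ≠ 0) :
    1 / (M * (M + s)) * (-2 * M * s ^ 2 - 2 * s * s ^ 2) = -2 * s ^ 2 / M := by
  field_simp
  ring

end KerrHorizon

/-- The function F controlling the norm of the horizon generator K = T + (a/(2Mr₊))Φ
vanishes at r₊, has the stated strictly negative derivative there, and hence is
negative just outside the horizon. -/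
theorem stmt_10 (M a : ℝ) (hM : 0 < M) (ha : 0 ≤ a) (haM : a < M)
    (rp rm : ℝ) (hrp : rp = M + Real.sqrt (M ^ 2 - a ^ 2))
    (hrm : rm = M - Real.sqrt (M ^ 2 - a ^ 2))
    (F : ℝ → ℝ)
    (hF : ∀ r, F r = -(r ^ 2 - 2 * M * r + a ^ 2) + a ^ 2 - 2 * a ^ 2 * r / rp
        + a ^ 2 * (r ^ 2 + a ^ 2) ^ 2 / (4 * M ^ 2 * rp ^ 2)) :
    F rp = 0
    ∧ HasDerivAt F (-(rp - rm) - 2 * a ^ 2 / rp + 2 * a ^ 2 / M) rp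
    ∧ -(rp - rm) - 2 * a ^ 2 / rp + 2 * a ^ 2 / M
        = (1 / (M * (M + Real.sqrt (M ^ 2 - a ^ 2))))
          * (-2 * M * (M ^ 2 - a ^ 2) - 2 * Real.sqrt (M ^ 2 - a ^ 2) * (M ^ 2 - a ^ 2))
    ∧ -(rp - rm) - 2 * a ^ 2 / rp + 2 * a ^ 2 / M < 0
    ∧ ∃ ε₀ > 0, ∀ r : ℝ, rp < r → r < rp + ε₀ → F r < 0 := by
  obtain rfl : F = horizonNorm M a rp := funext hF
  set s := Real.sqrt (M ^ 2 - a ^ 2)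
  have hs_pos : 0 < s := Real.sqrt_pos.mpr (by nlinarith)
  have hs : s ^ 2 = M ^ 2 - a ^ 2 := Real.sq_sqrt (by nlinarith)
  have hMs : M + s ≠ 0 := by positivity
  subst hrp hrm
  have hroot := outer_horizon_sq_add hs
  have hzero := horizonNorm_self hM.ne' hMs hroot
  have hderiv : HasDerivAt (horizonNorm M a (M + s))
      (-((M + s) - (M - s)) - 2 * a ^ 2 / (M + s) + 2 * a ^ 2 / M) (M + s) := by
    convert hasDerivAt_horizonNorm_self hM.ne' hMs hroot using 3
    ring
  have hform : -((M + s) - (M - s)) - 2 * a ^ 2 / (M + s) + 2 * a ^ 2 / M = -2 * s ^ 2 / M :=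
    surfaceGravity_form_eq hM.ne' hMs hs
  have hneg : -2 * s ^ 2 / M < 0 := by
    have : 0 < s ^ 2 := by positivity
    exact div_neg_of_neg_of_pos (by linarith) hM
  refine ⟨hzero, hderiv, ?_, hform ▸ hneg, ?_⟩
  · rw [hform, ← hs, surfaceGravity_factored_eq hM.ne' hMs]
  · exact hderiv.exists_forall_neg_right hzero (hform ▸ hneg)
end

section
/- Let ω ∈ ℝ, let V, f : ℝ → ℝ with f three times differentiable and V differentiable, let u : ℝ → ℂ be twice differentiable, and set H = u'' + (ω² − V)u. Define Q^f = f·(|u'|² + (ω² − V)|u|²) + f'·Re(u' \overline{u}) − (1/2)f''·|u|². Then (Q^f)' = 2f'|u'|² − fV'|u|² + Re(2f \overline{H} u' + f' \overline{H} u) − (1/2)f'''|u|². -/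
/-! Writing `‖z‖² = Re (z * conj z)`, every term of `Q` is a real part of a product `z * conj w`,
which the product rule differentiates; after substituting `u'' = H - (ω² - V) u` the terms
carrying `ω² - V` cancel. -/

open ComplexConjugate

theorem HasDerivAt.re_mul_conj {u v : ℝ → ℂ} {u' v' : ℂ} {x : ℝ}
    (hu : HasDerivAt u u' x) (hv : HasDerivAt v v' x) :
    HasDerivAt (fun y => (u y * conj (v y)).re) (u' * conj (v x) + u x * conj v').re x :=
  Complex.reCLM.hasFDerivAt.comp_hasDerivAt x (hu.mul hv.star)

theorem Complex.sq_norm_eq_re_mul_conj (z : ℂ) : ‖z‖ ^ 2 = (z * conj z).re := by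
  rw [Complex.mul_conj', ← Complex.ofReal_pow, Complex.ofReal_re]

/-- Derivative identity for the frequency-localised virial current Q^f applied to a
solution u of u'' + (ω² − V)u = H:
`(Q^f)' = 2f'|u'|² − fV'|u|² + Re(2f H̄ u' + f' H̄ u) − (1/2)f'''|u|²`. -/
theorem stmt_12 (ω : ℝ) (V f : ℝ → ℝ) (u : ℝ → ℂ)
    (hV : Differentiable ℝ V)
    (hf : Differentiable ℝ f) (hf' : Differentiable ℝ (deriv f))
    (hf'' : Differentiable ℝ (deriv (deriv f)))
    (hu : Differentiable ℝ u) (hu' : Differentiable ℝ (deriv u))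
    (H : ℝ → ℂ)
    (hH : ∀ x, H x = deriv (deriv u) x + ((ω ^ 2 - V x : ℝ) : ℂ) * u x)
    (Q : ℝ → ℝ)
    (hQ : ∀ x, Q x = f x * (‖deriv u x‖ ^ 2 + (ω ^ 2 - V x) * ‖u x‖ ^ 2)
        + deriv f x * (deriv u x * starRingEnd ℂ (u x)).re
        - (1 / 2) * deriv (deriv f) x * ‖u x‖ ^ 2) :
    ∀ x : ℝ, deriv Q x
      = 2 * deriv f x * ‖deriv u x‖ ^ 2 - f x * deriv V x * ‖u x‖ ^ 2
        + (2 * ((f x : ℝ) : ℂ) * starRingEnd ℂ (H x) * deriv u x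
            + ((deriv f x : ℝ) : ℂ) * starRingEnd ℂ (H x) * u x).re
        - (1 / 2) * deriv (deriv (deriv f)) x * ‖u x‖ ^ 2 := by
  intro x
  simp only [Complex.sq_norm_eq_re_mul_conj] at hQ
  obtain rfl : Q = _ := funext hQ
  have hu₁ := (hu x).hasDerivAt
  have hu₂ := (hu' x).hasDerivAt
  have hQ' := ((hf x).hasDerivAt.mul ((hu₂.re_mul_conj hu₂).add
      (((hV x).hasDerivAt.const_sub (ω ^ 2)).mul (hu₁.re_mul_conj hu₁)))).add
    ((hf' x).hasDerivAt.mul (hu₂.re_mul_conj hu₁)) |>.sub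
    (((hf'' x).hasDerivAt.const_mul (1 / 2)).mul (hu₁.re_mul_conj hu₁))
  refine hQ'.deriv.trans ?_
  rw [eq_sub_of_add_eq (hH x).symm]
  simp only [Pi.add_apply, Pi.mul_apply, Complex.sq_norm_eq_re_mul_conj,
    Complex.add_re, Complex.sub_re, Complex.mul_re, Complex.mul_im, Complex.sub_im,
    Complex.ofReal_re, Complex.ofReal_im, Complex.conj_re, Complex.conj_im, Complex.re_ofNat,
    Complex.im_ofNat, map_sub]
  ring
end
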